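/- arXiv:2411.19476 — 2 statements merged into one kernel-verified Lean document; each statement's English description precedes it below -/
import Mathlib

section
/- Let H be a finite simple graph with a designated twin set TS(H) and let 0 ≤ k < |TS(H)|. If the families D_k(H) and D_{k+1}(H) are both nonempty, then |γ_k(H) − γ_{k+1}(H)| = 1. -/
/-- A finite simple graph on a subset of an ambient vertex type `α`,
together with a designated twin set `TS ⊆ verts`. -/
structure TSGraph (α : Type*) where
  verts : Finset α
  Adj : α → α → Prop
  symm : ∀ u v, Adj u v → Adj v u
  irrefl : ∀ u, ¬ Adj u u
  adj_mem : ∀ u v, Adj u v → u ∈ verts ∧ v ∈ verts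
  TS : Finset α
  TS_sub : TS ⊆ verts

namespace TSGraph

variable {α : Type*} [DecidableEq α]

/-- `f` encodes a perfect matching of the subgraph of `G` induced by `S`:
every vertex of `S` is paired with an adjacent vertex of `S`, involutively. -/
def IsPM (G : TSGraph α) (S : Finset α) (f : α → α) : Prop :=
  ∀ v ∈ S, f v ∈ S ∧ G.Adj v (f v) ∧ f (f v) = v

/-- `S ⊆ V(G)` dominates `V(G) − TS(G)` and, for some `X ⊆ S ∩ TS(G)` of size `k`,
the subgraph induced by `S − X` has a perfect matching. -/
def Adm (G : TSGraph α) (k : ℕ) (S : Finset α) : Prop :=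
  S ⊆ G.verts ∧
  (∀ v ∈ G.verts, v ∉ G.TS → v ∈ S ∨ ∃ u ∈ S, G.Adj u v) ∧
  ∃ X ⊆ S ∩ G.TS, X.card = k ∧ ∃ f, G.IsPM (S \ X) f

/-- Membership in the family `D_k(G)`: admissible of minimum cardinality. -/
def memD (G : TSGraph α) (k : ℕ) (S : Finset α) : Prop :=
  G.Adm k S ∧ ∀ S', G.Adm k S' → S.card ≤ S'.card

/-- `D_k(G) ≠ ∅`. -/
def DkNonempty (G : TSGraph α) (k : ℕ) : Prop := ∃ S, G.memD k S

/-- `D_k(G) ≠ ∅` for all `0 ≤ k ≤ |TS(G)|`. -/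
def AllDkNonempty (G : TSGraph α) : Prop := ∀ k ≤ G.TS.card, G.DkNonempty k

/-- `γ_k(G)`: the common cardinality of the members of `D_k(G)`. -/
noncomputable def gamma (G : TSGraph α) (k : ℕ) : ℕ :=
  sInf {n | ∃ S, G.Adm k S ∧ S.card = n}

/-- A paired-dominating set of `G`. -/
def IsPDS (G : TSGraph α) (D : Finset α) : Prop :=
  D ⊆ G.verts ∧
  (∀ v ∈ G.verts, v ∈ D ∨ ∃ u ∈ D, G.Adj u v) ∧
  ∃ f, G.IsPM D f

/-- `γ_p(G)`: the paired-domination number. -/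
noncomputable def gammaP (G : TSGraph α) : ℕ :=
  sInf {n | ∃ D, G.IsPDS D ∧ D.card = n}

/-- Membership in `D_p(G)`: minimum-cardinality paired-dominating sets. -/
def memDp (G : TSGraph α) (D : Finset α) : Prop :=
  G.IsPDS D ∧ D.card = G.gammaP

/-- `min(G) = min { γ_k(G) : 0 ≤ k ≤ |TS(G)| }`. -/
noncomputable def minVal (G : TSGraph α) : ℕ :=
  sInf {n | ∃ k ≤ G.TS.card, G.gamma k = n}

/-- `α(G)`: the smallest `k` with `γ_k(G) = min(G)`. -/
noncomputable def alphaVal (G : TSGraph α) : ℕ :=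
  sInf {k | k ≤ G.TS.card ∧ G.gamma k = G.minVal}

/-- `β(G)`: the largest `k` with `γ_k(G) = min(G)`. -/
noncomputable def betaVal (G : TSGraph α) : ℕ :=
  sSup {k | k ≤ G.TS.card ∧ G.gamma k = G.minVal}

/-- Membership in `Ψ(G)`: sets in some `D_k(G)` of cardinality `min(G)`. -/
def memPsi (G : TSGraph α) (D : Finset α) : Prop :=
  (∃ k, k ≤ G.TS.card ∧ G.memD k D) ∧ D.card = G.minVal

/-- Equation (2) holds for `G`. -/
def Eq2Holds (G : TSGraph α) : Prop :=
  ∀ k ≤ G.TS.card,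
    (k ≤ G.alphaVal → G.gamma k = G.minVal + G.alphaVal - k) ∧
    (G.betaVal ≤ k → G.gamma k = G.minVal + k - G.betaVal) ∧
    (G.alphaVal < k → k < G.betaVal → Even (k - G.alphaVal) → G.gamma k = G.minVal) ∧
    (G.alphaVal < k → k < G.betaVal → ¬ Even (k - G.alphaVal) → G.gamma k = G.minVal + 1)

/-- `G = Gl ⊗ Gr` (true twin composition). -/
def IsTrueTwin (G Gl Gr : TSGraph α) : Prop :=
  Disjoint Gl.verts Gr.verts ∧
  G.verts = Gl.verts ∪ Gr.verts ∧
  (∀ u v, G.Adj u v ↔ Gl.Adj u v ∨ Gr.Adj u v ∨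
    (u ∈ Gl.TS ∧ v ∈ Gr.TS) ∨ (u ∈ Gr.TS ∧ v ∈ Gl.TS)) ∧
  G.TS = Gl.TS ∪ Gr.TS

/-- `G = Gl ⊙ Gr` (false twin composition). -/
def IsFalseTwin (G Gl Gr : TSGraph α) : Prop :=
  Disjoint Gl.verts Gr.verts ∧
  G.verts = Gl.verts ∪ Gr.verts ∧
  (∀ u v, G.Adj u v ↔ Gl.Adj u v ∨ Gr.Adj u v) ∧
  G.TS = Gl.TS ∪ Gr.TS

/-- `G = Gl ⊕ Gr` (attachment composition). -/
def IsAttach (G Gl Gr : TSGraph α) : Prop :=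
  Disjoint Gl.verts Gr.verts ∧
  G.verts = Gl.verts ∪ Gr.verts ∧
  (∀ u v, G.Adj u v ↔ Gl.Adj u v ∨ Gr.Adj u v ∨
    (u ∈ Gl.TS ∧ v ∈ Gr.TS) ∨ (u ∈ Gr.TS ∧ v ∈ Gl.TS)) ∧
  G.TS = Gl.TS

/-- The twin-set graph `G` arises from a decomposition tree all of whose associated
twin-set graphs satisfy the property `P`. -/
inductive FromDecompTree (P : TSGraph α → Prop) : TSGraph α → Prop where
  | single (G : TSGraph α) (v : α) (hv : G.verts = {v}) (hts : G.TS = {v})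
      (hadj : ∀ u w, ¬ G.Adj u w) (hP : P G) : FromDecompTree P G
  | ttwin (G Gl Gr : TSGraph α) (hl : FromDecompTree P Gl) (hr : FromDecompTree P Gr)
      (h : IsTrueTwin G Gl Gr) (hP : P G) : FromDecompTree P G
  | ftwin (G Gl Gr : TSGraph α) (hl : FromDecompTree P Gl) (hr : FromDecompTree P Gr)
      (h : IsFalseTwin G Gl Gr) (hP : P G) : FromDecompTree P G
  | attach (G Gl Gr : TSGraph α) (hl : FromDecompTree P Gl) (hr : FromDecompTree P Gr)
      (h : IsAttach G Gl Gr) (hP : P G) : FromDecompTree P G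

end TSGraph

/-
If `S \ X` has a perfect matching then `|S| ≡ |X| (mod 2)`, so `γ_k` and `γ_{k+1}` have different
parities, and it suffices to show `|γ_k - γ_{k+1}| ≤ 1`. Both inequalities come from local surgery
on an optimal set that changes its size by at most one.
* `k → k + 1`: pick `y ∈ TS \ X`. If `y ∉ S`, add it to `S` and to `X`. Otherwise move `y` into
  `X` and repair its partner `z`: match `z` to a neighbour `w ∉ S` (adding `w`), or, if there is
  none, drop `z` from `S`; then `y` still dominates `z`.
* `k + 1 → k`: pick `y ∈ X` and take it out of `X`. Match it to a neighbour `w ∉ S` (adding `w`),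
  or, if there is none, drop `y` from `S`: it lies in `TS` and all its neighbours stay in `S`.
-/

namespace TSGraph

variable {α : Type*} {G : TSGraph α}

def DominatesNonTwins (G : TSGraph α) (S : Finset α) : Prop :=
  ∀ v ∈ G.verts, v ∉ G.TS → v ∈ S ∨ ∃ u ∈ S, G.Adj u v

def HasPM (G : TSGraph α) (M : Finset α) : Prop :=
  ∃ f, G.IsPM M f

lemma adm_iff [DecidableEq α] {k : ℕ} {S : Finset α} :
    G.Adm k S ↔ S ⊆ G.verts ∧ G.DominatesNonTwins S ∧
      ∃ X ⊆ S, X ⊆ G.TS ∧ X.card = k ∧ G.HasPM (S \ X) := by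
  simp only [Adm, DominatesNonTwins, HasPM, Finset.subset_inter_iff, and_assoc]

section Matching

variable {M : Finset α} {f : α → α}

lemma IsPM.apply_ne (hf : G.IsPM M f) {v : α} (hv : v ∈ M) : f v ≠ v :=
  fun h => G.irrefl v (by simpa [h] using (hf v hv).2.1)

variable [DecidableEq α]

lemma IsPM.erase_pair (hf : G.IsPM M f) {a : α} (ha : a ∈ M) :
    G.IsPM ((M.erase a).erase (f a)) f := by
  intro v hv
  simp only [Finset.mem_erase] at hv
  obtain ⟨hvfa, hva, hvM⟩ := hv
  obtain ⟨hfvM, hadj, hffv⟩ := hf v hvM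
  refine ⟨?_, hadj, hffv⟩
  simp only [Finset.mem_erase]
  exact ⟨fun h => hva (by rw [← hffv, h, (hf a ha).2.2]), fun h => hvfa (by rw [← hffv, h]), hfvM⟩

lemma IsPM.even_card (hf : G.IsPM M f) : Even M.card := by
  induction M using Finset.strongInduction with
  | H M ih =>
    rcases M.eq_empty_or_nonempty with rfl | ⟨a, ha⟩
    · simp
    have hfa : f a ∈ M.erase a := Finset.mem_erase.mpr ⟨hf.apply_ne ha, (hf a ha).1⟩
    have hlt : (M.erase a).erase (f a) ⊂ M :=
      (Finset.erase_subset _ _).trans_ssubset (Finset.erase_ssubset ha)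
    have hcard : ((M.erase a).erase (f a)).card + 2 = M.card := by
      rw [← Finset.card_erase_add_one ha, ← Finset.card_erase_add_one hfa]
    rw [← hcard]
    exact (ih _ hlt (hf.erase_pair ha)).add even_two

lemma HasPM.insert_pair (hM : G.HasPM M) {a b : α} (ha : a ∉ M) (hb : b ∉ M)
    (hab : G.Adj a b) : G.HasPM (insert a (insert b M)) := by
  obtain ⟨f, hf⟩ := hM
  have hba : b ≠ a := fun h => G.irrefl a (h ▸ hab)
  refine ⟨fun v => if v = a then b else if v = b then a else f v, fun v hv => ?_⟩
  rcases Finset.mem_insert.mp hv with rfl | hv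
  · simp [hba, hab]
  rcases Finset.mem_insert.mp hv with rfl | hvM
  · simp [hba, G.symm _ _ hab]
  obtain ⟨hfvM, hadj, hffv⟩ := hf v hvM
  have hfva : f v ≠ a := fun h => ha (h ▸ hfvM)
  have hfvb : f v ≠ b := fun h => hb (h ▸ hfvM)
  have hva : v ≠ a := fun h => ha (h ▸ hvM)
  have hvb : v ≠ b := fun h => hb (h ▸ hvM)
  simp [hva, hvb, hfva, hfvb, hfvM, hadj, hffv]

end Matching

section Domination

variable {S T : Finset α}

lemma DominatesNonTwins.mono (hS : G.DominatesNonTwins S) (hST : S ⊆ T) :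
    G.DominatesNonTwins T := fun v hv hvTS =>
  (hS v hv hvTS).imp (@hST v) fun ⟨u, hu, huv⟩ => ⟨u, hST hu, huv⟩

variable [DecidableEq α]

lemma DominatesNonTwins.erase (hS : G.DominatesNonTwins S) {v : α}
    (hnbr : ∀ w, G.Adj v w → w ∈ S) (hv : v ∈ G.TS ∨ ∃ u ∈ S, G.Adj u v) :
    G.DominatesNonTwins (S.erase v) := by
  have hne : ∀ {u w}, G.Adj u w → u ≠ w := fun h e => G.irrefl _ (e ▸ h)
  intro x hx hxTS
  by_cases hxv : x = v
  · subst hxv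
    obtain ⟨u, hu, hux⟩ := hv.resolve_left hxTS
    exact Or.inr ⟨u, Finset.mem_erase.mpr ⟨hne hux, hu⟩, hux⟩
  rcases hS x hx hxTS with hxS | ⟨u, hu, hux⟩
  · exact Or.inl (Finset.mem_erase.mpr ⟨hxv, hxS⟩)
  by_cases huv : u = v
  · subst huv
    exact Or.inl (Finset.mem_erase.mpr ⟨hxv, hnbr x hux⟩)
  · exact Or.inr ⟨u, Finset.mem_erase.mpr ⟨huv, hu⟩, hux⟩

end Domination

section Admissible

variable [DecidableEq α] {k : ℕ} {S : Finset α}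

lemma Adm.card_mod_two (h : G.Adm k S) : S.card % 2 = k % 2 := by
  obtain ⟨-, -, X, hXS, -, rfl, f, hf⟩ := adm_iff.mp h
  have hcard := Finset.card_sdiff_add_card_eq_card hXS
  obtain ⟨m, hm⟩ := hf.even_card
  omega

lemma Adm.exists_succ (h : G.Adm k S) (hk : k < G.TS.card) :
    ∃ S', G.Adm (k + 1) S' ∧ S'.card ≤ S.card + 1 := by
  obtain ⟨hSV, hdom, X, hXS, hXTS, rfl, f, hf⟩ := adm_iff.mp h
  obtain ⟨y, hyTS, hyX⟩ := Finset.exists_mem_notMem_of_card_lt_card hk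
  have hXcard : (insert y X).card = X.card + 1 := Finset.card_insert_of_notMem hyX
  by_cases hyS : y ∉ S
  · refine ⟨insert y S, adm_iff.mpr ⟨Finset.insert_subset (G.TS_sub hyTS) hSV,
      hdom.mono (Finset.subset_insert _ _), insert y X, Finset.insert_subset_insert _ hXS,
      Finset.insert_subset hyTS hXTS, hXcard, f, ?_⟩, Finset.card_insert_le _ _⟩
    rwa [Finset.insert_sdiff_insert, Finset.sdiff_insert_of_notMem hyS]
  push Not at hyS
  have hyM : y ∈ S \ X := Finset.mem_sdiff.mpr ⟨hyS, hyX⟩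
  obtain ⟨hzM, hyz, -⟩ := hf y hyM
  set z := f y with hz
  have hzy : z ≠ y := hf.apply_ne hyM
  rw [Finset.mem_sdiff] at hzM
  have hX'S : insert y X ⊆ S.erase z :=
    Finset.insert_subset (Finset.mem_erase.mpr ⟨hzy.symm, hyS⟩)
      fun x hx => Finset.mem_erase.mpr ⟨fun e => hzM.2 (e ▸ hx), hXS hx⟩
  by_cases hw : ∃ w, G.Adj z w ∧ w ∉ S
  · obtain ⟨w, hzw, hwS⟩ := hw
    have hM' : insert w S \ insert y X = insert z (insert w (((S \ X).erase y).erase z)) := by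
      ext v
      simp only [Finset.mem_sdiff, Finset.mem_insert, Finset.mem_erase]
      grind
    refine ⟨insert w S, adm_iff.mpr ⟨Finset.insert_subset (G.adj_mem z w hzw).2 hSV,
      hdom.mono (Finset.subset_insert _ _), insert y X,
      hX'S.trans ((Finset.erase_subset _ _).trans (Finset.subset_insert _ _)),
      Finset.insert_subset hyTS hXTS, hXcard, ?_⟩, Finset.card_insert_le _ _⟩
    rw [hM']
    exact HasPM.insert_pair ⟨f, hf.erase_pair hyM⟩ (Finset.notMem_erase _ _) (by simp [hwS]) hzw
  · push Not at hw
    have hM' : S.erase z \ insert y X = ((S \ X).erase y).erase z := by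
      ext v
      simp only [Finset.mem_sdiff, Finset.mem_insert, Finset.mem_erase]
      grind
    refine ⟨S.erase z, adm_iff.mpr ⟨(Finset.erase_subset _ _).trans hSV,
      hdom.erase hw (Or.inr ⟨y, hyS, hyz⟩), insert y X, hX'S,
      Finset.insert_subset hyTS hXTS, hXcard, f, hM' ▸ hf.erase_pair hyM⟩, ?_⟩
    exact (Finset.card_erase_le).trans (Nat.le_succ _)

lemma Adm.exists_pred (h : G.Adm (k + 1) S) :
    ∃ S', G.Adm k S' ∧ S'.card ≤ S.card + 1 := by
  obtain ⟨hSV, hdom, X, hXS, hXTS, hXcard, hM⟩ := adm_iff.mp h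
  obtain ⟨y, hyX⟩ : X.Nonempty := Finset.card_pos.mp (by omega)
  have hyS : y ∈ S := hXS hyX
  have hXcard' : (X.erase y).card = k := by rw [Finset.card_erase_of_mem hyX, hXcard]; rfl
  by_cases hw : ∃ w, G.Adj y w ∧ w ∉ S
  · obtain ⟨w, hyw, hwS⟩ := hw
    have hM' : insert w S \ X.erase y = insert y (insert w (S \ X)) := by
      ext v
      simp only [Finset.mem_sdiff, Finset.mem_insert, Finset.mem_erase]
      grind
    refine ⟨insert w S, adm_iff.mpr ⟨Finset.insert_subset (G.adj_mem y w hyw).2 hSV,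
      hdom.mono (Finset.subset_insert _ _), X.erase y,
      (Finset.erase_subset _ _).trans (hXS.trans (Finset.subset_insert _ _)),
      (Finset.erase_subset _ _).trans hXTS, hXcard', ?_⟩, Finset.card_insert_le _ _⟩
    rw [hM']
    exact hM.insert_pair (by simp [hyX]) (by simp [hwS]) hyw
  · push Not at hw
    have hM' : S.erase y \ X.erase y = S \ X := by
      ext v
      simp only [Finset.mem_sdiff, Finset.mem_erase]
      grind
    refine ⟨S.erase y, adm_iff.mpr ⟨(Finset.erase_subset _ _).trans hSV,
      hdom.erase hw (Or.inl (hXTS hyX)), X.erase y, Finset.erase_subset_erase _ hXS,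
      (Finset.erase_subset _ _).trans hXTS, hXcard', hM' ▸ hM⟩, ?_⟩
    exact (Finset.card_erase_le).trans (Nat.le_succ _)

end Admissible

lemma gamma_le [DecidableEq α] {k : ℕ} {S : Finset α} (h : G.Adm k S) : G.gamma k ≤ S.card :=
  Nat.sInf_le ⟨S, h, rfl⟩

lemma DkNonempty.exists_adm_card_eq_gamma [DecidableEq α] {k : ℕ} (h : G.DkNonempty k) :
    ∃ S, G.Adm k S ∧ S.card = G.gamma k := by
  obtain ⟨S, hS⟩ := h
  exact Nat.sInf_mem (s := {n | ∃ S, G.Adm k S ∧ S.card = n}) ⟨S.card, S, hS.1, rfl⟩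

end TSGraph

open TSGraph in
/-- If `0 ≤ k < |TS(H)|` and `D_k(H)`, `D_{k+1}(H)` are nonempty,
then `|γ_k(H) − γ_{k+1}(H)| = 1`. -/
theorem stmt3 {α : Type*} [DecidableEq α] (H : TSGraph α) (k : ℕ)
    (hk : k < H.TS.card)
    (h1 : H.DkNonempty k) (h2 : H.DkNonempty (k + 1)) :
    |(H.gamma k : ℤ) - (H.gamma (k + 1) : ℤ)| = 1 := by
  obtain ⟨S, hS, hSγ⟩ := h1.exists_adm_card_eq_gamma
  obtain ⟨T, hT, hTγ⟩ := h2.exists_adm_card_eq_gamma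
  obtain ⟨S', hS', hS'card⟩ := hS.exists_succ hk
  obtain ⟨T', hT', hT'card⟩ := hT.exists_pred
  have hup := gamma_le hS'
  have hdown := gamma_le hT'
  have hSmod := hS.card_mod_two
  have hTmod := hT.card_mod_two
  exact (abs_eq zero_le_one).mpr (by omega)
end

section
/- Let G = G_l ⊗ G_r be a true twin composition, and assume D_k(H) ≠ ∅ for each H ∈ {G, G_l, G_r} and each 0 ≤ k ≤ |TS(H)|. For D ⊆ V(G), set D_l = D ∩ V(G_l) and D_r = D ∩ V(G_r). Then D ∈ Ψ(G) if and only if D_l ∈ Ψ(G_l) and D_r ∈ Ψ(G_r). -/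
/-!
In a `k`-admissible set of `G = Gl ⊗ Gr`, a matching edge between `V(Gl)` and `V(Gr)` joins two
twin vertices; dropping it and declaring both endpoints unmatched restricts the set to admissible
sets of `Gl` and `Gr`, while admissible sets of `Gl` and `Gr` always unite to one of `G`. Hence
`min(G) = min(Gl) + min(Gr)`, and as `|D|` is the sum of the sizes of its two halves, `D` attains
`min(G)` exactly when each half attains the minimum of its side.
-/

namespace TSGraph

variable {α : Type*} {G H : TSGraph α} {k : ℕ} {S : Finset α}

lemma IsPM.mono_adj (hGH : ∀ u v, G.Adj u v → H.Adj u v) {f : α → α} (hf : G.IsPM S f) :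
    H.IsPM S f :=
  fun v hv => let ⟨hfv, hadj, hff⟩ := hf v hv; ⟨hfv, hGH _ _ hadj, hff⟩

variable [DecidableEq α]

lemma IsPM.union {A B : Finset α} {f g : α → α} (hf : G.IsPM A f) (hg : G.IsPM B g)
    (hAB : Disjoint A B) : G.IsPM (A ∪ B) (fun v => if v ∈ A then f v else g v) := by
  intro v hv
  by_cases hvA : v ∈ A
  · obtain ⟨hfv, hadj, hff⟩ := hf v hvA
    simp [hvA, hfv, hadj, hff]
  · obtain ⟨hgv, hadj, hgg⟩ := hg v ((Finset.mem_union.mp hv).resolve_left hvA)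
    simp [hvA, Finset.disjoint_right.mp hAB hgv, hgv, hadj, hgg]

lemma IsPM.restrict {T L : Finset α} {f : α → α} (hf : G.IsPM T f)
    (hadj : ∀ v ∈ T, v ∈ L → f v ∈ L → H.Adj v (f v)) :
    H.IsPM ((T ∩ L).filter (fun v => f v ∈ L)) f := by
  intro v hv
  simp only [Finset.mem_filter, Finset.mem_inter] at hv ⊢
  obtain ⟨⟨hvT, hvL⟩, hfvL⟩ := hv
  obtain ⟨hfvT, -, hff⟩ := hf v hvT
  exact ⟨⟨⟨hfvT, hfvL⟩, by rwa [hff]⟩, hadj v hvT hvL hfvL, hff⟩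

lemma adm_of_isPM {M : Finset α} {f : α → α} (hS : S ⊆ G.verts)
    (hdom : ∀ v ∈ G.verts, v ∉ G.TS → v ∈ S ∨ ∃ u ∈ S, G.Adj u v)
    (hM : M ⊆ S) (hTS : S \ M ⊆ G.TS) (hf : G.IsPM M f) : G.Adm (S \ M).card S :=
  ⟨hS, hdom, S \ M, Finset.subset_inter Finset.sdiff_subset hTS, rfl, f,
    by rwa [Finset.sdiff_sdiff_eq_self hM]⟩

lemma gamma_le_card (h : G.Adm k S) : G.gamma k ≤ S.card :=
  Nat.sInf_le ⟨S, h, rfl⟩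

lemma memD.card_eq_gamma (h : G.memD k S) : S.card = G.gamma k := by
  obtain ⟨T, hT, hTcard⟩ := Nat.sInf_mem (s := {n | ∃ S, G.Adm k S ∧ S.card = n}) ⟨_, S, h.1, rfl⟩
  exact le_antisymm (by rw [gamma, ← hTcard]; exact h.2 T hT) (gamma_le_card h.1)

lemma minVal_le_gamma (hk : k ≤ G.TS.card) : G.minVal ≤ G.gamma k :=
  Nat.sInf_le ⟨k, hk, rfl⟩

lemma minVal_le_card (hk : k ≤ G.TS.card) (h : G.Adm k S) : G.minVal ≤ S.card :=
  (minVal_le_gamma hk).trans (gamma_le_card h)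

lemma memPsi_of_adm (hk : k ≤ G.TS.card) (h : G.Adm k S) (hcard : S.card ≤ G.minVal) :
    G.memPsi S :=
  ⟨⟨k, hk, h, fun _ hS' => hcard.trans (minVal_le_card hk hS')⟩,
    hcard.antisymm (minVal_le_card hk h)⟩

lemma exists_adm_card_eq_minVal (hG : G.AllDkNonempty) :
    ∃ k ≤ G.TS.card, ∃ S, G.Adm k S ∧ S.card = G.minVal := by
  obtain ⟨k, hk, hmin⟩ :=
    Nat.sInf_mem (s := {n | ∃ k ≤ G.TS.card, G.gamma k = n}) ⟨_, 0, Nat.zero_le _, rfl⟩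
  obtain ⟨S, hS⟩ := hG k hk
  exact ⟨k, hk, S, hS.1, hS.card_eq_gamma.trans hmin⟩

namespace IsTrueTwin

variable {Gl Gr : TSGraph α} {u v : α}

lemma symm (h : IsTrueTwin G Gl Gr) : IsTrueTwin G Gr Gl := by
  obtain ⟨hdis, hverts, hadj, hTS⟩ := h
  exact ⟨hdis.symm, by rw [hverts, Finset.union_comm],
    fun u v => by rw [hadj u v]; tauto, by rw [hTS, Finset.union_comm]⟩

lemma notMem_right (h : IsTrueTwin G Gl Gr) (hv : v ∈ Gl.verts) : v ∉ Gr.verts :=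
  Finset.disjoint_left.mp h.1 hv

lemma mem_TS_iff (h : IsTrueTwin G Gl Gr) (hv : v ∈ Gl.verts) : v ∈ G.TS ↔ v ∈ Gl.TS := by
  rw [h.2.2.2, Finset.mem_union]
  exact or_iff_left fun hr => h.notMem_right hv (Gr.TS_sub hr)

lemma adj_of_left (h : IsTrueTwin G Gl Gr) (huv : Gl.Adj u v) : G.Adj u v :=
  (h.2.2.1 u v).mpr (Or.inl huv)

lemma adj_iff_of_mem_left (h : IsTrueTwin G Gl Gr) (hv : v ∈ Gl.verts) :
    G.Adj u v ↔ Gl.Adj u v ∨ (u ∈ Gr.TS ∧ v ∈ Gl.TS) := by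
  have hvr := h.notMem_right hv
  rw [h.2.2.1]
  constructor
  · rintro (huv | huv | huv | huv)
    · exact Or.inl huv
    · exact absurd (Gr.adj_mem _ _ huv).2 hvr
    · exact absurd (Gr.TS_sub huv.2) hvr
    · exact Or.inr huv
  · rintro (huv | huv)
    · exact Or.inl huv
    · exact Or.inr (Or.inr (Or.inr huv))

lemma card_TS (h : IsTrueTwin G Gl Gr) : G.TS.card = Gl.TS.card + Gr.TS.card := by
  rw [h.2.2.2, Finset.card_union_of_disjoint
    (Finset.disjoint_of_subset_left Gl.TS_sub (Finset.disjoint_of_subset_right Gr.TS_sub h.1))]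

lemma inter_union_inter {D : Finset α} (h : IsTrueTwin G Gl Gr) (hD : D ⊆ G.verts) :
    D ∩ Gl.verts ∪ D ∩ Gr.verts = D := by
  rw [← Finset.inter_union_distrib_left, ← h.2.1, Finset.inter_eq_left.mpr hD]

lemma card_eq_add {D : Finset α} (h : IsTrueTwin G Gl Gr) (hD : D ⊆ G.verts) :
    D.card = (D ∩ Gl.verts).card + (D ∩ Gr.verts).card := by
  conv_lhs => rw [← h.inter_union_inter hD]
  exact Finset.card_union_of_disjoint
    (Finset.disjoint_of_subset_left Finset.inter_subset_right
      (Finset.disjoint_of_subset_right Finset.inter_subset_right h.1))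

lemma adm_union (h : IsTrueTwin G Gl Gr) {kl kr : ℕ} {Sl Sr : Finset α}
    (hl : Gl.Adm kl Sl) (hr : Gr.Adm kr Sr) : G.Adm (kl + kr) (Sl ∪ Sr) := by
  obtain ⟨hSl, hdoml, Xl, hXl, rfl, fl, hfl⟩ := hl
  obtain ⟨hSr, hdomr, Xr, hXr, rfl, fr, hfr⟩ := hr
  have hdisS : Disjoint Sl Sr :=
    Finset.disjoint_of_subset_left hSl (Finset.disjoint_of_subset_right hSr h.1)
  have hXlS : Xl ⊆ Sl := hXl.trans Finset.inter_subset_left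
  have hXrS : Xr ⊆ Sr := hXr.trans Finset.inter_subset_left
  have hsdiff : (Sl ∪ Sr) \ (Xl ∪ Xr) = Sl \ Xl ∪ Sr \ Xr := by
    ext v
    have hv : v ∈ Sl → v ∉ Sr := fun hv => Finset.disjoint_left.mp hdisS hv
    have hvl := @hXlS v
    have hvr := @hXrS v
    simp only [Finset.mem_union, Finset.mem_sdiff]
    tauto
  refine ⟨?_, ?_, Xl ∪ Xr, ?_, Finset.card_union_of_disjoint (hdisS.mono hXlS hXrS), ?_⟩
  · rw [h.2.1]
    exact Finset.union_subset_union hSl hSr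
  · intro v hv hvTS
    rcases Finset.mem_union.mp (h.2.1 ▸ hv) with hv | hv
    · exact (hdoml v hv ((h.mem_TS_iff hv).not.mp hvTS)).imp (Finset.mem_union_left _)
        fun ⟨u, hu, huv⟩ => ⟨u, Finset.mem_union_left _ hu, h.adj_of_left huv⟩
    · exact (hdomr v hv ((h.symm.mem_TS_iff hv).not.mp hvTS)).imp (Finset.mem_union_right _)
        fun ⟨u, hu, huv⟩ => ⟨u, Finset.mem_union_right _ hu, h.symm.adj_of_left huv⟩
  · rw [h.2.2.2]
    exact Finset.union_subset
      (hXl.trans (Finset.inter_subset_inter Finset.subset_union_left Finset.subset_union_left))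
      (hXr.trans (Finset.inter_subset_inter Finset.subset_union_right Finset.subset_union_right))
  · rw [hsdiff]
    exact ⟨_, (hfl.mono_adj fun _ _ => h.adj_of_left).union
      (hfr.mono_adj fun _ _ => h.symm.adj_of_left)
      (Finset.disjoint_of_subset_left Finset.sdiff_subset
        (Finset.disjoint_of_subset_right Finset.sdiff_subset hdisS))⟩

lemma dominates_inter_left (h : IsTrueTwin G Gl Gr)
    (hdom : ∀ v ∈ G.verts, v ∉ G.TS → v ∈ S ∨ ∃ u ∈ S, G.Adj u v) :
    ∀ v ∈ Gl.verts, v ∉ Gl.TS → v ∈ S ∩ Gl.verts ∨ ∃ u ∈ S ∩ Gl.verts, Gl.Adj u v := by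
  intro v hv hvTS
  rcases hdom v (h.2.1 ▸ Finset.mem_union_left _ hv) ((h.mem_TS_iff hv).not.mpr hvTS) with
    hvS | ⟨u, huS, huv⟩
  · exact Or.inl (Finset.mem_inter.mpr ⟨hvS, hv⟩)
  · have huv : Gl.Adj u v := ((h.adj_iff_of_mem_left hv).mp huv).resolve_right (hvTS ·.2)
    exact Or.inr ⟨u, Finset.mem_inter.mpr ⟨huS, (Gl.adj_mem _ _ huv).1⟩, huv⟩

lemma exists_adm_inter_left (h : IsTrueTwin G Gl Gr) (hS : G.Adm k S) :
    ∃ kl ≤ Gl.TS.card, Gl.Adm kl (S ∩ Gl.verts) := by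
  obtain ⟨-, hdom, X, hX, -, f, hf⟩ := hS
  set M := ((S \ X) ∩ Gl.verts).filter (fun v => f v ∈ Gl.verts) with hM_def
  have hM : M ⊆ S ∩ Gl.verts :=
    (Finset.filter_subset _ _).trans (Finset.inter_subset_inter_right Finset.sdiff_subset)
  have hTS : (S ∩ Gl.verts) \ M ⊆ Gl.TS := by
    intro v hv
    simp only [hM_def, Finset.mem_sdiff, Finset.mem_inter, Finset.mem_filter] at hv
    obtain ⟨⟨hvS, hvl⟩, hvM⟩ := hv
    by_cases hvX : v ∈ X
    · exact (h.mem_TS_iff hvl).mp (Finset.mem_inter.mp (hX hvX)).2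
    · have hfvl : f v ∉ Gl.verts := fun hfvl => hvM ⟨⟨⟨hvS, hvX⟩, hvl⟩, hfvl⟩
      obtain ⟨-, hadj, -⟩ := hf v (Finset.mem_sdiff.mpr ⟨hvS, hvX⟩)
      exact (((h.adj_iff_of_mem_left hvl).mp (G.symm _ _ hadj)).resolve_left
        fun hadj => hfvl (Gl.adj_mem _ _ hadj).1).2
  refine ⟨_, Finset.card_le_card hTS,
    adm_of_isPM Finset.inter_subset_right (h.dominates_inter_left hdom) hM hTS (hf.restrict ?_)⟩
  intro v hvT hvl hfvl
  obtain ⟨-, hadj, -⟩ := hf v hvT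
  exact ((h.adj_iff_of_mem_left hfvl).mp hadj).resolve_right
    fun hvr => h.notMem_right hvl (Gr.TS_sub hvr.1)

lemma minVal_add_le_card (h : IsTrueTwin G Gl Gr) (hS : G.Adm k S) :
    Gl.minVal + Gr.minVal ≤ S.card := by
  obtain ⟨kl, hkl, hl⟩ := h.exists_adm_inter_left hS
  obtain ⟨kr, hkr, hr⟩ := h.symm.exists_adm_inter_left hS
  rw [h.card_eq_add hS.1]
  exact add_le_add (minVal_le_card hkl hl) (minVal_le_card hkr hr)

lemma minVal_eq (h : IsTrueTwin G Gl Gr) (hG : G.AllDkNonempty) (hGl : Gl.AllDkNonempty)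
    (hGr : Gr.AllDkNonempty) : G.minVal = Gl.minVal + Gr.minVal := by
  obtain ⟨k, -, S, hS, hS_card⟩ := exists_adm_card_eq_minVal hG
  obtain ⟨kl, hkl, Sl, hSl, hSl_card⟩ := exists_adm_card_eq_minVal hGl
  obtain ⟨kr, hkr, Sr, hSr, hSr_card⟩ := exists_adm_card_eq_minVal hGr
  refine le_antisymm ?_ (hS_card ▸ h.minVal_add_le_card hS)
  calc G.minVal ≤ (Sl ∪ Sr).card :=
        minVal_le_card (by rw [h.card_TS]; omega) (h.adm_union hSl hSr)
    _ ≤ Sl.card + Sr.card := Finset.card_union_le _ _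
    _ = Gl.minVal + Gr.minVal := by rw [hSl_card, hSr_card]

end IsTrueTwin

end TSGraph

open TSGraph in
/-- For a true twin composition `G = Gl ⊗ Gr` with all `D_k`
families nonempty and `D ⊆ V(G)`: `D ∈ Ψ(G)` iff `D ∩ V(Gl) ∈ Ψ(Gl)` and
`D ∩ V(Gr) ∈ Ψ(Gr)`. -/
theorem stmt7 {α : Type*} [DecidableEq α] (G Gl Gr : TSGraph α)
    (hcomp : IsTrueTwin G Gl Gr)
    (hG : G.AllDkNonempty) (hGl : Gl.AllDkNonempty) (hGr : Gr.AllDkNonempty)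
    (D : Finset α) (hD : D ⊆ G.verts) :
    G.memPsi D ↔ (Gl.memPsi (D ∩ Gl.verts) ∧ Gr.memPsi (D ∩ Gr.verts)) := by
  have hmin := hcomp.minVal_eq hG hGl hGr
  have hcard := hcomp.card_eq_add hD
  constructor
  · rintro ⟨⟨k, -, hS, -⟩, hD_card⟩
    obtain ⟨kl, hkl, hl⟩ := hcomp.exists_adm_inter_left hS
    obtain ⟨kr, hkr, hr⟩ := hcomp.symm.exists_adm_inter_left hS
    have hl_min := minVal_le_card hkl hl
    have hr_min := minVal_le_card hkr hr
    exact ⟨memPsi_of_adm hkl hl (by omega), memPsi_of_adm hkr hr (by omega)⟩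
  · rintro ⟨⟨⟨kl, hkl, hl, -⟩, hl_card⟩, ⟨kr, hkr, hr, -⟩, hr_card⟩
    have hS := hcomp.adm_union hl hr
    rw [hcomp.inter_union_inter hD] at hS
    exact memPsi_of_adm (by rw [hcomp.card_TS]; omega) hS (by omega)
end
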